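/- arXiv:1806.04721 — 7 statements merged into one kernel-verified Lean document; each statement's English description precedes it below -/
import Mathlib

section
/- Let (G_n, δ_n)_{n∈ℕ} be a sequence of proper metric monoids with identity elements e_n. Then the set R((G_n,δ_n)_{n∈ℕ}) of regular sequences is a monoid under pointwise multiplication: the sequence (e_n)_{n∈ℕ} of identity elements is regular, and for any two regular sequences (g_n)_{n∈ℕ} and (g'_n)_{n∈ℕ}, the pointwise product (g_n g'_n)_{n∈ℕ} is again a regular sequence (in particular it is bounded). -/
/-- A sequence through a sequence of metric monoids is bounded when
`sup_n δ_n(e_n, g_n) < ∞`. -/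
def BoundedSeq {G : ℕ → Type*} [∀ n, Monoid (G n)] [∀ n, MetricSpace (G n)]
    (g : ∀ n, G n) : Prop :=
  ∃ M : ℝ, ∀ n, dist (1 : G n) (g n) ≤ M

/-- A bounded sequence is regular when the right translations by its terms are
asymptotically uniformly equicontinuous. -/
def RegularSeq {G : ℕ → Type*} [∀ n, Monoid (G n)] [∀ n, MetricSpace (G n)]
    (g : ∀ n, G n) : Prop :=
  BoundedSeq g ∧
    ∀ ε : ℝ, 0 < ε → ∃ ω : ℝ, 0 < ω ∧ ∃ N : ℕ, ∀ n, N ≤ n → ∀ h k : G n,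
      dist h k < ω → dist (h * g n) (k * g n) < ε

/-! Right translation by `g n * g' n` is right translation by `g n` followed by right
translation by `g' n`, so the moduli of asymptotic equicontinuity compose. Boundedness of the
product follows from the triangle inequality through `g n`, since left invariance gives
`δ(g, g g') = δ(e, g')`. -/

section

variable {G : ℕ → Type*} [∀ n, Monoid (G n)] [∀ n, MetricSpace (G n)]

theorem BoundedSeq.mul
    (h_left : ∀ n, ∀ g h k : G n, dist (g * h) (g * k) = dist h k)
    {g g' : ∀ n, G n} (hg : BoundedSeq g) (hg' : BoundedSeq g') :
    BoundedSeq fun n => g n * g' n := by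
  obtain ⟨M, hM⟩ := hg
  obtain ⟨M', hM'⟩ := hg'
  refine ⟨M + M', fun n => ?_⟩
  have h_shift : dist (g n) (g n * g' n) = dist (1 : G n) (g' n) := by
    simpa using h_left n (g n) 1 (g' n)
  calc dist (1 : G n) (g n * g' n) ≤ dist (1 : G n) (g n) + dist (g n) (g n * g' n) :=
        dist_triangle _ _ _
    _ ≤ M + M' := by rw [h_shift]; exact add_le_add (hM n) (hM' n)

theorem RegularSeq.one : RegularSeq (fun n => (1 : G n)) :=
  ⟨⟨0, fun n => by simp⟩, fun ε hε => ⟨ε, hε, 0, fun n _ h k hhk => by simpa using hhk⟩⟩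

theorem RegularSeq.mul (h_left : ∀ n, ∀ g h k : G n, dist (g * h) (g * k) = dist h k)
    {g g' : ∀ n, G n} (hg : RegularSeq g) (hg' : RegularSeq g') :
    RegularSeq fun n => g n * g' n := by
  refine ⟨hg.1.mul h_left hg'.1, fun ε hε => ?_⟩
  obtain ⟨ω', hω', N', hN'⟩ := hg'.2 ε hε
  obtain ⟨ω, hω, N, hN⟩ := hg.2 ω' hω'
  refine ⟨ω, hω, max N N', fun n hn h k hhk => ?_⟩
  have h_first := hN n (le_of_max_le_left hn) h k hhk
  simpa only [mul_assoc] using hN' n (le_of_max_le_right hn) _ _ h_first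

end

theorem regularSequences_monoid_general
    (G : ℕ → Type*) [∀ n, Monoid (G n)] [∀ n, MetricSpace (G n)]
    (h_left : ∀ n, ∀ g h k : G n, dist (g * h) (g * k) = dist h k) :
    RegularSeq (fun n => (1 : G n)) ∧
      ∀ g g' : ∀ n, G n, RegularSeq g → RegularSeq g' →
        (BoundedSeq fun n => g n * g' n) ∧ RegularSeq (fun n => g n * g' n) :=
  ⟨RegularSeq.one, fun _ _ hg hg' => ⟨hg.1.mul h_left hg'.1, hg.mul h_left hg'⟩⟩

/-- For a sequence of proper metric monoids, the set of regular
sequences is a monoid under pointwise multiplication: the sequence of identity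
elements is regular, and the pointwise product of two regular sequences is again
regular (in particular it is bounded). -/
theorem regularSequences_monoid
    (G : ℕ → Type*) [∀ n, Monoid (G n)] [∀ n, MetricSpace (G n)]
    (h_left : ∀ n, ∀ g h k : G n, dist (g * h) (g * k) = dist h k)
    (h_cont : ∀ n, Continuous fun p : G n × G n => p.1 * p.2)
    (h_proper : ∀ n, ProperSpace (G n)) :
    RegularSeq (fun n => (1 : G n)) ∧
      ∀ g g' : ∀ n, G n, RegularSeq g → RegularSeq g' →
        (BoundedSeq fun n => g n * g' n) ∧ RegularSeq (fun n => g n * g' n) :=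
  regularSequences_monoid_general G h_left
end

section
/- Let (G_n, δ_n)_{n∈ℕ} be a sequence of proper metric monoids. Let (g_n)_{n∈ℕ}, (g'_n)_{n∈ℕ}, (h_n)_{n∈ℕ}, (h'_n)_{n∈ℕ} be regular sequences such that lim_{n→∞} δ_n(g_n, g'_n) = 0 and lim_{n→∞} δ_n(h_n, h'_n) = 0. Then lim_{n→∞} δ_n(g_n h_n, g'_n h'_n) = 0. In other words, the equivalence relation (g_n) ∼ (h_n) ⟺ lim_{n→∞} δ_n(g_n, h_n) = 0 is a congruence for the pointwise multiplication of regular sequences. -/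
open Filter Topology

theorem RegularSeq.tendsto_dist_mul_right {G : ℕ → Type*} [∀ n, Monoid (G n)]
    [∀ n, MetricSpace (G n)] {h : ∀ n, G n} (hh : RegularSeq h) {a b : ∀ n, G n}
    (hab : Tendsto (fun n => dist (a n) (b n)) atTop (𝓝 0)) :
    Tendsto (fun n => dist (a n * h n) (b n * h n)) atTop (𝓝 0) := by
  refine tendsto_order.2 ⟨fun ε hε => .of_forall fun n => hε.trans_le dist_nonneg,
    fun ε hε => ?_⟩
  obtain ⟨ω, hω, N, hN⟩ := hh.2 ε hε
  filter_upwards [eventually_ge_atTop N, (tendsto_order.1 hab).2 ω hω] with n hn hclose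
  exact hN n hn _ _ hclose

theorem regular_equiv_congruence_general
    (G : ℕ → Type*) [∀ n, Monoid (G n)] [∀ n, MetricSpace (G n)]
    (h_left : ∀ n, ∀ g h k : G n, dist (g * h) (g * k) = dist h k)
    (g g' h h' : ∀ n, G n)
    (hh' : RegularSeq h')
    (hgg' : Filter.Tendsto (fun n => dist (g n) (g' n)) Filter.atTop (nhds 0))
    (hhh' : Filter.Tendsto (fun n => dist (h n) (h' n)) Filter.atTop (nhds 0)) :
    Filter.Tendsto (fun n => dist (g n * h n) (g' n * h' n)) Filter.atTop (nhds 0) := by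
  have hleft : Tendsto (fun n => dist (g n * h n) (g n * h' n)) atTop (𝓝 0) := by
    simpa only [h_left] using hhh'
  have hright := hh'.tendsto_dist_mul_right hgg'
  refine squeeze_zero (fun n => dist_nonneg) (fun n => dist_triangle _ (g n * h' n) _) ?_
  simpa using hleft.add hright

/-- The relation "`lim_n δ_n(g_n, h_n) = 0`" is a congruence for the
pointwise multiplication of regular sequences over a sequence of proper metric
monoids. -/
theorem regular_equiv_congruence
    (G : ℕ → Type*) [∀ n, Monoid (G n)] [∀ n, MetricSpace (G n)]
    (h_left : ∀ n, ∀ g h k : G n, dist (g * h) (g * k) = dist h k)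
    (h_cont : ∀ n, Continuous fun p : G n × G n => p.1 * p.2)
    (h_proper : ∀ n, ProperSpace (G n))
    (g g' h h' : ∀ n, G n)
    (hg : RegularSeq g) (hg' : RegularSeq g') (hh : RegularSeq h) (hh' : RegularSeq h')
    (hgg' : Filter.Tendsto (fun n => dist (g n) (g' n)) Filter.atTop (nhds 0))
    (hhh' : Filter.Tendsto (fun n => dist (h n) (h' n)) Filter.atTop (nhds 0)) :
    Filter.Tendsto (fun n => dist (g n * h n) (g' n * h' n)) Filter.atTop (nhds 0) :=
  regular_equiv_congruence_general G h_left g g' h h' hh' hgg' hhh'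
end

section
/- Let (G_n, δ_n)_{n∈ℕ} be a sequence of proper metric monoids with identity elements e_n, and suppose for each n ∈ ℕ there are ε_n > 0 with Σ_{n=0}^∞ ε_n < √2/2 and a (1/ε_n)-local ε_n-almost isometric isomorphism (ς_n, κ_n) from (G_n,δ_n) to (G_{n+1},δ_{n+1}); assume moreover that for all N ∈ ℕ and all g ∈ G_N[1/Σ_{n=N}^∞ ε_n], the sequence ϖ_N(g) (equal to e_n for n < N, to g at index N, and to ς_{n-1} applied to the previous term for n > N) is regular. For k > n set ς_n^k = ς_{k-1} ∘ ⋯ ∘ ς_n, let H_∞ be the set of regular sequences (g_n)_{n∈ℕ} such that for every ε > 0 there exists N ∈ ℕ with δ_j(g_j, ς_n^j(g_n)) < ε for all n ≥ N and all j > n, let D((g_n),(h_n)) = limsup_{n→∞} δ_n(g_n, h_n), let G_∞ be the quotient of H_∞ by the relation D = 0, and let δ_∞ be the metric induced by D on G_∞. Then for every R > 0, the closed ball of radius R in (G_∞, δ_∞) centered at the class of (e_n)_{n∈ℕ} is totally bounded. -/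
/-- `(ς, κ)` is an `r`-local `ε`-almost isometric isomorphism between the metric
monoids `G` and `H`. -/
def IsLocAlmostIsoIso {G H : Type*} [Monoid G] [MetricSpace G] [Monoid H] [MetricSpace H]
    (ς : G → H) (κ : H → G) (ε r : ℝ) : Prop :=
  ς 1 = 1 ∧ κ 1 = 1 ∧
    (∀ g ∈ Metric.closedBall (1 : G) r, ∀ g' ∈ Metric.closedBall (1 : G) r,
      ∀ h ∈ Metric.closedBall (1 : H) r,
        |dist (ς g * ς g') h - dist (g * g') (κ h)| ≤ ε) ∧
    (∀ g ∈ Metric.closedBall (1 : H) r, ∀ g' ∈ Metric.closedBall (1 : H) r,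
      ∀ h ∈ Metric.closedBall (1 : G) r,
        |dist (κ g * κ g') h - dist (g * g') (ς h)| ≤ ε)
/-- Iterated application of the maps `ς` starting at index `N`. -/
def iterMap {G : ℕ → Type*} (ς : ∀ n, G n → G (n + 1)) (N : ℕ) (g : G N) :
    ∀ k : ℕ, G (N + k)
  | 0 => g
  | k + 1 => ς (N + k) (iterMap ς N g k)

/-- The sequence `ϖ_N(g)`: identity before index `N`, `g` at index `N`, and then the
successive images of `g` under the maps `ς`. -/
def varpi {G : ℕ → Type*} [∀ n, Monoid (G n)] (ς : ∀ n, G n → G (n + 1)) (N : ℕ)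
    (g : G N) (n : ℕ) : G n :=
  if h : N ≤ n then cast (congrArg G (Nat.add_sub_cancel' h)) (iterMap ς N g (n - N))
  else 1
/-- The compositions `ς_n^{n+k} = ς_{n+k-1} ∘ ⋯ ∘ ς_n`. -/
def compMap {G : ℕ → Type*} (ς : ∀ n, G n → G (n + 1)) (n : ℕ) :
    ∀ k : ℕ, G n → G (n + k)
  | 0 => fun g => g
  | k + 1 => fun g => ς (n + k) (compMap ς n k g)

/-- The map `ς_n^j = ς_{j-1} ∘ ⋯ ∘ ς_n : G_n → G_j` for `n ≤ j`. -/
def sigmaComp {G : ℕ → Type*} (ς : ∀ n, G n → G (n + 1)) {n j : ℕ} (h : n ≤ j)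
    (g : G n) : G j :=
  cast (congrArg G (Nat.add_sub_cancel' h)) (compMap ς n (j - n) g)

/-- Membership in `H_∞`: regular sequences which are asymptotically coherent with the
maps `ς`. -/
def MemHInf {G : ℕ → Type*} [∀ n, Monoid (G n)] [∀ n, MetricSpace (G n)]
    (ς : ∀ n, G n → G (n + 1)) (g : ∀ n, G n) : Prop :=
  RegularSeq g ∧
    ∀ ε : ℝ, 0 < ε → ∃ N : ℕ, ∀ n, N ≤ n → ∀ j : ℕ, ∀ hnj : n < j,
      dist (g j) (sigmaComp ς hnj.le (g n)) < ε
/-- The pseudometric `D((g_n), (h_n)) = limsup_n δ_n(g_n, h_n)` on sequences. -/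
noncomputable def limsupDist {G : ℕ → Type*} [∀ n, MetricSpace (G n)]
    (g h : ∀ n, G n) : ℝ :=
  Filter.limsup (fun n => dist (g n) (h n)) Filter.atTop

/-! Choose `N` so large that the tail `T = ∑_{k ≥ N} ε_k` is small. Beyond level `N` the
compositions of the `ς` are `2T`-almost isometric on a fixed ball, and pulling back along the
`κ` shows that every element far up the tower is within `3T` of the image of an element of
`G_N`. A finite net of a closed ball of the proper space `G_N`, pushed up the tower by the `ς`,
is therefore a finite net of the `D`-ball; its members are regular by hypothesis and exactly
coherent, hence lie in `H_∞`. -/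

open Finset Filter Metric

section Reindexing

variable {G : ℕ → Type*} (ς : ∀ n, G n → G (n + 1))

theorem iterMap_eq_compMap (N : ℕ) (g : G N) : ∀ k, iterMap ς N g k = compMap ς N k g
  | 0 => rfl
  | k + 1 => congrArg (ς (N + k)) (iterMap_eq_compMap N g k)

theorem cast_compMap {n k k' : ℕ} (hk : k = k') (e : G (n + k) = G (n + k')) (g : G n) :
    cast e (compMap ς n k g) = compMap ς n k' g := by
  subst hk; rfl

theorem sigmaComp_add {n k : ℕ} (h : n ≤ n + k) (g : G n) :
    sigmaComp ς h g = compMap ς n k g :=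
  cast_compMap ς (Nat.add_sub_cancel_left n k) _ g

variable [∀ n, Monoid (G n)]

theorem varpi_add (N k : ℕ) (g : G N) : varpi ς N g (N + k) = compMap ς N k g := by
  rw [varpi, dif_pos (Nat.le_add_right N k), iterMap_eq_compMap]
  exact cast_compMap ς (Nat.add_sub_cancel_left N k) _ g

theorem varpi_succ {N m : ℕ} (h : N ≤ m) (g : G N) :
    varpi ς N g (m + 1) = ς m (varpi ς N g m) := by
  obtain ⟨a, rfl⟩ := Nat.exists_eq_add_of_le h
  show varpi ς N g (N + (a + 1)) = _
  rw [varpi_add, varpi_add]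
  rfl

theorem compMap_varpi {N n : ℕ} (hN : N ≤ n) (g : G N) :
    ∀ k, compMap ς n k (varpi ς N g n) = varpi ς N g (n + k)
  | 0 => rfl
  | k + 1 => (congrArg (ς (n + k)) (compMap_varpi hN g k)).trans
      (varpi_succ ς (hN.trans (Nat.le_add_right n k)) g).symm

end Reindexing

namespace IsLocAlmostIsoIso

variable {G H : Type*} [Monoid G] [MetricSpace G] [Monoid H] [MetricSpace H]
  {ς : G → H} {κ : H → G} {e r : ℝ}

theorem symm (h : IsLocAlmostIsoIso ς κ e r) : IsLocAlmostIsoIso κ ς e r :=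
  ⟨h.2.1, h.1, h.2.2.2, h.2.2.1⟩

theorem mono {r' : ℝ} (h : IsLocAlmostIsoIso ς κ e r) (hr : r' ≤ r) :
    IsLocAlmostIsoIso ς κ e r' := by
  obtain ⟨h₁, h₂, hς, hκ⟩ := h
  have sG : closedBall (1 : G) r' ⊆ closedBall 1 r := closedBall_subset_closedBall hr
  have sH : closedBall (1 : H) r' ⊆ closedBall 1 r := closedBall_subset_closedBall hr
  exact ⟨h₁, h₂, fun g hg g' hg' k hk => hς g (sG hg) g' (sG hg') k (sH hk),
    fun g hg g' hg' k hk => hκ g (sH hg) g' (sH hg') k (sG hk)⟩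

theorem dist_apply_one_le (h : IsLocAlmostIsoIso ς κ e r) {x : G} (hx : x ∈ closedBall 1 r) :
    dist (ς x) 1 ≤ dist x 1 + e := by
  have hr : 0 ≤ r := dist_nonneg.trans hx
  have := h.2.2.1 x hx 1 (mem_closedBall_self hr) 1 (mem_closedBall_self hr)
  simp only [h.1, h.2.1, mul_one] at this
  linarith [(abs_le.mp this).2]

theorem dist_apply_symm_apply_le (h : IsLocAlmostIsoIso ς κ e r) {z : H}
    (hz : z ∈ closedBall 1 r) (hκz : κ z ∈ closedBall 1 r) : dist (ς (κ z)) z ≤ e := by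
  have := h.2.2.1 (κ z) hκz 1 (mem_closedBall_self (dist_nonneg.trans hz)) z hz
  simp only [h.1, mul_one, dist_self, sub_zero, abs_dist] at this
  exact this

theorem dist_apply_apply_le (h : IsLocAlmostIsoIso ς κ e r) {x y : G}
    (hx : x ∈ closedBall 1 r) (hy : y ∈ closedBall 1 r) (hςy : ς y ∈ closedBall 1 r) :
    dist (ς x) (ς y) ≤ dist x y + 2 * e := by
  have hback := h.symm.dist_apply_symm_apply_le hy hςy
  have := h.2.2.1 x hx 1 (mem_closedBall_self (dist_nonneg.trans hx)) (ς y) hςy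
  simp only [h.1, mul_one] at this
  linarith [(abs_le.mp this).2, dist_triangle x y (κ (ς y)), dist_comm y (κ (ς y))]

end IsLocAlmostIsoIso

section Iterate

variable {G : ℕ → Type*} [∀ n, Monoid (G n)] [∀ n, MetricSpace (G n)]
  {ς : ∀ n, G n → G (n + 1)} {κ : ∀ n, G (n + 1) → G n} {ε : ℕ → ℝ} {r : ℝ} {n : ℕ}

theorem dist_compMap_one_le (hε : ∀ m, 0 ≤ ε m)
    (hiso : ∀ m, n ≤ m → IsLocAlmostIsoIso (ς m) (κ m) (ε m) r) :
    ∀ k (x : G n), dist x 1 + ∑ i ∈ range k, ε (n + i) ≤ r →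
      dist (compMap ς n k x) 1 ≤ dist x 1 + ∑ i ∈ range k, ε (n + i)
  | 0, x, _ => by simp [compMap]
  | k + 1, x, hx => by
    rw [sum_range_succ] at hx ⊢
    have ih := dist_compMap_one_le hε hiso k x (by linarith [hε (n + k)])
    refine ((hiso (n + k) (Nat.le_add_right n k)).dist_apply_one_le
      (mem_closedBall.2 (by linarith [hε (n + k)]))).trans ?_
    linarith

theorem dist_compMap_compMap_le (hε : ∀ m, 0 ≤ ε m)
    (hiso : ∀ m, n ≤ m → IsLocAlmostIsoIso (ς m) (κ m) (ε m) r) :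
    ∀ k (x y : G n), dist x 1 + ∑ i ∈ range k, ε (n + i) ≤ r →
      dist y 1 + ∑ i ∈ range k, ε (n + i) ≤ r →
      dist (compMap ς n k x) (compMap ς n k y) ≤ dist x y + 2 * ∑ i ∈ range k, ε (n + i)
  | 0, x, y, _, _ => by simp [compMap]
  | k + 1, x, y, hx, hy => by
    have hyk1 := dist_compMap_one_le hε hiso (k + 1) y hy
    rw [sum_range_succ] at hx hy hyk1 ⊢
    have hx' : dist x 1 + ∑ i ∈ range k, ε (n + i) ≤ r := by linarith [hε (n + k)]
    have hy' : dist y 1 + ∑ i ∈ range k, ε (n + i) ≤ r := by linarith [hε (n + k)]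
    have hxk := dist_compMap_one_le hε hiso k x hx'
    have hyk := dist_compMap_one_le hε hiso k y hy'
    refine ((hiso (n + k) (Nat.le_add_right n k)).dist_apply_apply_le
      (mem_closedBall.2 (by linarith [hε (n + k)])) (mem_closedBall.2 (by linarith [hε (n + k)]))
      (mem_closedBall.2 (hyk1.trans hy))).trans ?_
    linarith [dist_compMap_compMap_le hε hiso k x y hx' hy']

theorem exists_dist_compMap_le (hε : ∀ m, 0 ≤ ε m)
    (hiso : ∀ m, n ≤ m → IsLocAlmostIsoIso (ς m) (κ m) (ε m) r) :
    ∀ k (z : G (n + k)), dist z 1 + 2 * ∑ i ∈ range k, ε (n + i) ≤ r →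
      ∃ w : G n, dist w 1 ≤ dist z 1 + ∑ i ∈ range k, ε (n + i) ∧
        dist (compMap ς n k w) z ≤ 3 * ∑ i ∈ range k, ε (n + i)
  | 0, z, _ => ⟨z, by simp [compMap]⟩
  | k + 1, z, hz => by
    rw [sum_range_succ] at hz ⊢
    have hsum₀ : 0 ≤ ∑ i ∈ range k, ε (n + i) := sum_nonneg fun i _ => hε (n + i)
    have hεk := hε (n + k)
    have hisok := hiso (n + k) (Nat.le_add_right n k)
    have hzr : z ∈ closedBall 1 r := mem_closedBall.2 (by linarith)
    have hκz := hisok.symm.dist_apply_one_le hzr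
    have hκzr : κ (n + k) z ∈ closedBall 1 r := mem_closedBall.2 (by linarith)
    have hςκz := hisok.dist_apply_symm_apply_le hzr hκzr
    obtain ⟨w, hw, hwz⟩ := exists_dist_compMap_le hε hiso k (κ (n + k) z) (by linarith)
    have hwk := dist_compMap_one_le hε hiso k w (by linarith)
    have hstep := hisok.dist_apply_apply_le (mem_closedBall.2 (by linarith)) hκzr
      (mem_closedBall.2 (by linarith [dist_triangle (ς (n + k) (κ (n + k) z)) z 1]))
    refine ⟨w, by linarith, ?_⟩
    calc dist (ς (n + k) (compMap ς n k w)) z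
        ≤ dist (ς (n + k) (compMap ς n k w)) (ς (n + k) (κ (n + k) z))
          + dist (ς (n + k) (κ (n + k) z)) z := dist_triangle _ _ _
      _ ≤ 3 * (∑ i ∈ range k, ε (n + i) + ε (n + k)) := by linarith

end Iterate

theorem sum_range_le_tsum_nat_add {ε : ℕ → ℝ} (hε : ∀ m, 0 ≤ ε m) (h : Summable ε)
    {N n : ℕ} (hn : N ≤ n) (k : ℕ) : ∑ i ∈ range k, ε (n + i) ≤ ∑' j, ε (N + j) := by
  obtain ⟨a, rfl⟩ := Nat.exists_eq_add_of_le hn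
  have hsum : Summable fun j => ε (N + j) := by
    simpa only [Nat.add_comm] using (summable_nat_add_iff N).2 h
  calc ∑ i ∈ range k, ε (N + a + i) = ∑ j ∈ Ico a (a + k), ε (N + j) := by
        rw [sum_Ico_eq_sum_range, Nat.add_sub_cancel_left]
        simp only [Nat.add_assoc]
    _ ≤ ∑' j, ε (N + j) := hsum.sum_le_tsum _ fun j _ => hε (N + j)

section Sequences

variable {G : ℕ → Type*} [∀ n, Monoid (G n)] [∀ n, MetricSpace (G n)]
  {ς : ∀ n, G n → G (n + 1)}

theorem memHInf_varpi {N : ℕ} {p : G N} (h : RegularSeq (varpi ς N p)) :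
    MemHInf ς (varpi ς N p) := by
  refine ⟨h, fun δ hδ => ⟨N, fun _ hn j hnj => ?_⟩⟩
  obtain ⟨k, rfl⟩ := Nat.exists_eq_add_of_le hnj.le
  rwa [sigmaComp_add, compMap_varpi ς hn, dist_self]

theorem MemHInf.exists_forall_dist_compMap_lt {g : ∀ n, G n} (hg : MemHInf ς g) {δ : ℝ}
    (hδ : 0 < δ) : ∃ M, ∀ n, M ≤ n → ∀ k, dist (g (n + k)) (compMap ς n k (g n)) < δ := by
  obtain ⟨M, hM⟩ := hg.2 δ hδ
  refine ⟨M, fun n hn k => ?_⟩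
  rcases k with _ | k
  · simpa [compMap] using hδ
  · simpa only [sigmaComp_add] using hM n hn (n + (k + 1)) (by omega)

theorem BoundedSeq.eventually_dist_one_lt {g : ∀ n, G n} (hg : BoundedSeq g) {R ρ : ℝ}
    (hR : limsupDist g (fun _ => 1) ≤ R) (hρ : R < ρ) : ∀ᶠ n in atTop, dist (g n) 1 < ρ := by
  obtain ⟨M, hM⟩ := hg
  exact eventually_lt_of_limsup_lt (hR.trans_lt hρ)
    (isBoundedUnder_of ⟨M, fun n => (dist_comm _ _).trans_le (hM n)⟩)

end Sequences

theorem limsupDist_le_of_forall_add_le {G : ℕ → Type*} [∀ n, MetricSpace (G n)]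
    {g f : ∀ n, G n} {m : ℕ} {c : ℝ} (h : ∀ k, dist (g (m + k)) (f (m + k)) ≤ c) :
    limsupDist g f ≤ c :=
  limsup_le_of_le (isCoboundedUnder_le_of_le atTop fun _ => dist_nonneg)
    (eventually_atTop.2 ⟨m, fun j hj => by
      obtain ⟨k, rfl⟩ := Nat.exists_eq_add_of_le hj
      exact h k⟩)

section Approximation

variable {G : ℕ → Type*} [∀ n, Monoid (G n)] [∀ n, MetricSpace (G n)]
  {ς : ∀ n, G n → G (n + 1)} {κ : ∀ n, G (n + 1) → G n} {ε : ℕ → ℝ} {r S : ℝ} {N : ℕ}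

theorem limsupDist_varpi_le (hε : ∀ m, 0 ≤ ε m)
    (hiso : ∀ m, N ≤ m → IsLocAlmostIsoIso (ς m) (κ m) (ε m) r)
    (hS : ∀ m k, N ≤ m → ∑ i ∈ range k, ε (m + i) ≤ S) {g : ∀ n, G n} {n₀ : ℕ} {δ : ℝ}
    (hN : N ≤ n₀) (hg : ∀ k, dist (g (n₀ + k)) (compMap ς n₀ k (g n₀)) ≤ δ)
    (hgr : dist (g n₀) 1 + S ≤ r) (p : G N) (hpr : dist (varpi ς N p n₀) 1 + S ≤ r) :
    limsupDist g (varpi ς N p) ≤ δ + dist (g n₀) (varpi ς N p n₀) + 2 * S := by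
  refine limsupDist_le_of_forall_add_le (m := n₀) fun k => ?_
  have hiso' m (hm : n₀ ≤ m) := hiso m (hN.trans hm)
  have hk := hS n₀ k hN
  have hlip := dist_compMap_compMap_le hε hiso' k (g n₀) (varpi ς N p n₀)
    (by linarith) (by linarith)
  rw [← compMap_varpi ς hN p k]
  linarith [hg k, dist_triangle (g (n₀ + k)) (compMap ς n₀ k (g n₀))
    (compMap ς n₀ k (varpi ς N p n₀))]

theorem MemHInf.exists_limsupDist_varpi_le (hε : ∀ m, 0 ≤ ε m)
    (hiso : ∀ m, N ≤ m → IsLocAlmostIsoIso (ς m) (κ m) (ε m) r)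
    (hS : ∀ m k, N ≤ m → ∑ i ∈ range k, ε (m + i) ≤ S) {g : ∀ n, G n} (hg : MemHInf ς g)
    {ρ : ℝ} (hgρ : ∀ᶠ n in atTop, dist (g n) 1 < ρ) (hρ : ρ + 2 * S ≤ r) {δ : ℝ}
    (hδ : 0 < δ) :
    ∃ w : G N, dist w 1 ≤ ρ + S ∧ ∀ p : G N, dist p 1 + 2 * S ≤ r →
      limsupDist g (varpi ς N p) ≤ δ + dist w p + 7 * S := by
  have hS0 : 0 ≤ S := by simpa using hS N 0 le_rfl
  obtain ⟨M, hM⟩ := hg.exists_forall_dist_compMap_lt hδ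
  obtain ⟨n₀, hgn₀, hn₀⟩ := (hgρ.and (eventually_ge_atTop (max N M))).exists
  obtain ⟨k₀, rfl⟩ := Nat.exists_eq_add_of_le (le_of_max_le_left hn₀)
  have hk₀ := hS N k₀ le_rfl
  obtain ⟨w, hw, hwg⟩ := exists_dist_compMap_le hε hiso k₀ (g (N + k₀)) (by linarith)
  refine ⟨w, by linarith, fun p hp => ?_⟩
  have hpk₀ := dist_compMap_one_le hε hiso k₀ p (by linarith)
  have hwp := dist_compMap_compMap_le hε hiso k₀ w p (by linarith) (by linarith)
  rw [← varpi_add ς N k₀ p] at hpk₀ hwp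
  have := limsupDist_varpi_le hε hiso hS (Nat.le_add_right N k₀)
    (fun k => (hM _ (le_of_max_le_right hn₀) k).le) (by linarith) p (by linarith)
  linarith [dist_triangle (g (N + k₀)) (compMap ς N k₀ w) (varpi ς N p (N + k₀)),
    dist_comm (g (N + k₀)) (compMap ς N k₀ w)]

end Approximation

/-- `G_∞` is the quotient of `H_∞` by `D = 0` for `D = limsupDist`, so total boundedness of
its balls is stated in `(H_∞, D)`: the ball of radius `R` about `(e_n)_n` has a finite
`η`-net inside `H_∞`. -/
theorem ball_totallyBounded_general
    (G : ℕ → Type*) [∀ n, Monoid (G n)] [∀ n, MetricSpace (G n)]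
    (h_proper : ∀ n, ProperSpace (G n))
    (ε : ℕ → ℝ) (hε : ∀ n, 0 < ε n)
    (ς : ∀ n, G n → G (n + 1)) (κ : ∀ n, G (n + 1) → G n)
    (h_iso : ∀ n, IsLocAlmostIsoIso (ς n) (κ n) (ε n) (1 / ε n))
    (h_sum : Summable ε)
    (h_reg : ∀ N : ℕ, ∀ g : G N,
      dist (1 : G N) g ≤ 1 / (∑' k : ℕ, ε (N + k)) → RegularSeq (varpi ς N g)) :
    ∀ R : ℝ, 0 < R → ∀ η : ℝ, 0 < η →
      ∃ F : Set (∀ n, G n), F.Finite ∧ (∀ f ∈ F, MemHInf ς f) ∧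
        ∀ g : ∀ n, G n, MemHInf ς g → limsupDist g (fun n => (1 : G n)) ≤ R →
          ∃ f ∈ F, limsupDist g f < η := by
  intro R hR η hη
  have hε₀ m : 0 ≤ ε m := (hε m).le
  obtain ⟨N, hN⟩ := ((tendsto_sum_nat_add ε).eventually_le_const
    (lt_min (by positivity : 0 < η / 16) (by positivity : 0 < 1 / (R + 4)))).exists
  simp only [Nat.add_comm _ N, le_min_iff] at hN
  have hS m k (hm : N ≤ m) := sum_range_le_tsum_nat_add hε₀ h_sum hm k
  have hT : 0 < ∑' k, ε (N + k) := (hε N).trans_le (by simpa using hS N 1 le_rfl)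
  -- `R + 4` leaves room for elements of norm `< R + 1` moved by drifts of at most `3T ≤ 3`.
  have hiso m (hm : N ≤ m) : IsLocAlmostIsoIso (ς m) (κ m) (ε m) (R + 4) :=
    (h_iso m).mono ((le_one_div (by positivity) (hε m)).2
      (by simpa using (hS m 1 hm).trans hN.2))
  have hR4 : R + 4 ≤ 1 / ∑' k, ε (N + k) := (le_one_div (by positivity) hT).2 hN.2
  have hT1 : ∑' k, ε (N + k) ≤ 1 := hN.2.trans (by rw [div_le_one] <;> linarith)
  have := h_proper N
  obtain ⟨t, ht, htfin, hcover⟩ :=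
    (isCompact_closedBall (1 : G N) (R + 2)).finite_cover_balls (e := η / 8) (by positivity)
  refine ⟨varpi ς N '' t, htfin.image _, ?_, fun g hg hgR => ?_⟩
  · rintro _ ⟨p, hp, rfl⟩
    exact memHInf_varpi <| h_reg N p <| by
      linarith [dist_comm (1 : G N) p, mem_closedBall.1 (ht hp)]
  · obtain ⟨w, hw, hwp⟩ := hg.exists_limsupDist_varpi_le hε₀ hiso hS
      (hg.1.1.eventually_dist_one_lt hgR (lt_add_one R)) (by linarith) (δ := η / 8)
      (by positivity)
    obtain ⟨p, hp, hwp'⟩ := Set.mem_iUnion₂.1 (hcover (mem_closedBall.2 (by linarith)))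
    refine ⟨_, ⟨p, hp, rfl⟩, (hwp p (by linarith [mem_closedBall.1 (ht hp)])).trans_lt ?_⟩
    linarith [mem_ball.1 hwp']

/-- Under the assumptions of the completeness theorem, every closed
ball of `(G_∞, δ_∞)` centered at the class of the sequence of identity elements is
totally bounded.  Since `G_∞` is the quotient of `H_∞` by the vanishing of the
pseudometric `D = limsupDist`, and `δ_∞` is the induced metric, this is stated
equivalently at the level of `(H_∞, D)`: for every `R > 0` and `ε > 0`, there is a
finite set `F ⊆ H_∞` such that every element of the closed `D`-ball of radius `R`
centered at `(e_n)_n` is within `D`-distance `ε` of some element of `F`. -/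
theorem ball_totallyBounded
    (G : ℕ → Type*) [∀ n, Monoid (G n)] [∀ n, MetricSpace (G n)]
    (h_left : ∀ n, ∀ g h k : G n, dist (g * h) (g * k) = dist h k)
    (h_cont : ∀ n, Continuous fun p : G n × G n => p.1 * p.2)
    (h_proper : ∀ n, ProperSpace (G n))
    (ε : ℕ → ℝ) (hε : ∀ n, 0 < ε n)
    (ς : ∀ n, G n → G (n + 1)) (κ : ∀ n, G (n + 1) → G n)
    (h_iso : ∀ n, IsLocAlmostIsoIso (ς n) (κ n) (ε n) (1 / ε n))
    (h_sum : Summable ε) (h_sum' : (∑' n, ε n) < Real.sqrt 2 / 2)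
    (h_reg : ∀ N : ℕ, ∀ g : G N,
      dist (1 : G N) g ≤ 1 / (∑' k : ℕ, ε (N + k)) → RegularSeq (varpi ς N g)) :
    ∀ R : ℝ, 0 < R → ∀ η : ℝ, 0 < η →
      ∃ F : Set (∀ n, G n), F.Finite ∧ (∀ f ∈ F, MemHInf ς f) ∧
        ∀ g : ∀ n, G n, MemHInf ς g → limsupDist g (fun n => (1 : G n)) ≤ R →
          ∃ f ∈ F, limsupDist g f < η :=
  ball_totallyBounded_general G h_proper ε hε ς κ h_iso h_sum h_reg
end

section
/- Let (G, δ_G) and (H, δ_H) be two metric groups and let ε > 0. If (ς, κ) is a (1/ε)-local ε-almost isometric isomorphism from (G,δ_G) to (H,δ_H), then for every g ∈ G[1/ε] such that g⁻¹ ∈ G[1/ε], one has δ_H(ς(g)⁻¹, ς(g⁻¹)) ≤ ε. -/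
theorem IsLocAlmostIsoIso.dist_mul_one_le {G H : Type*} [Monoid G] [MetricSpace G] [Monoid H]
    [MetricSpace H] {ς : G → H} {κ : H → G} {ε r : ℝ} (h : IsLocAlmostIsoIso ς κ ε r)
    {g g' : G} (hg : g ∈ Metric.closedBall 1 r) (hg' : g' ∈ Metric.closedBall 1 r) :
    dist (ς g * ς g') 1 ≤ dist (g * g') 1 + ε := by
  obtain ⟨-, hκ, hς, -⟩ := h
  have hr : 0 ≤ r := dist_nonneg.trans hg
  have := hς g hg g' hg' 1 (Metric.mem_closedBall_self hr)
  rw [hκ] at this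
  linarith [(abs_le.mp this).2]

theorem dist_inv_eq_dist_mul_one {H : Type*} [Group H] [MetricSpace H]
    (h_left : ∀ g h k : H, dist (g * h) (g * k) = dist h k) (a b : H) :
    dist a⁻¹ b = dist (a * b) 1 := by
  rw [← h_left a, mul_inv_cancel, dist_comm]

theorem uiso_inverse_general
    (G H : Type*) [Group G] [MetricSpace G] [Group H] [MetricSpace H]
    (h_leftH : ∀ g h k : H, dist (g * h) (g * k) = dist h k)
    (ε : ℝ) (ς : G → H) (κ : H → G)
    (h_iso : IsLocAlmostIsoIso ς κ ε (1 / ε)) :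
    ∀ g : G, g ∈ Metric.closedBall (1 : G) (1 / ε) →
      g⁻¹ ∈ Metric.closedBall (1 : G) (1 / ε) →
      dist (ς g)⁻¹ (ς g⁻¹) ≤ ε := by
  intro g hg hg'
  calc dist (ς g)⁻¹ (ς g⁻¹) = dist (ς g * ς g⁻¹) 1 := dist_inv_eq_dist_mul_one h_leftH _ _
    _ ≤ dist (g * g⁻¹) 1 + ε := h_iso.dist_mul_one_le hg hg'
    _ = ε := by rw [mul_inv_cancel, dist_self, zero_add]

/-- If `(ς, κ)` is a `(1/ε)`-local `ε`-almost isometric isomorphism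
between two metric groups, then for any `g ∈ G[1/ε]` with `g⁻¹ ∈ G[1/ε]` we have
`δ_H(ς(g)⁻¹, ς(g⁻¹)) ≤ ε`. -/
theorem uiso_inverse
    (G H : Type*) [Group G] [MetricSpace G] [Group H] [MetricSpace H]
    (h_leftG : ∀ g h k : G, dist (g * h) (g * k) = dist h k)
    (h_contG : Continuous fun p : G × G => p.1 * p.2)
    (h_invG : Continuous fun g : G => g⁻¹)
    (h_leftH : ∀ g h k : H, dist (g * h) (g * k) = dist h k)
    (h_contH : Continuous fun p : H × H => p.1 * p.2)
    (h_invH : Continuous fun g : H => g⁻¹)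
    (ε : ℝ) (hε : 0 < ε) (ς : G → H) (κ : H → G)
    (h_iso : IsLocAlmostIsoIso ς κ ε (1 / ε)) :
    ∀ g : G, g ∈ Metric.closedBall (1 : G) (1 / ε) →
      g⁻¹ ∈ Metric.closedBall (1 : G) (1 / ε) →
      dist (ς g)⁻¹ (ς g⁻¹) ≤ ε :=
  uiso_inverse_general G H h_leftH ε ς κ h_iso
end

section
/- Let (G_n, δ_n)_{n∈ℕ} be a sequence of proper metric groups such that for all ε > 0 there exist ω > 0 and N ∈ ℕ such that for all n ≥ N and all g, h ∈ G_n, if δ_n(g,h) < ω then δ_n(g⁻¹, h⁻¹) < ε. Then every bounded sequence (g_n)_{n∈ℕ} ∈ ∏_{n∈ℕ} G_n is regular; that is, the set of regular sequences equals the set of all bounded sequences. -/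
def EventuallyUniformlyEquicontinuous {X Y : ℕ → Type*} [∀ n, PseudoMetricSpace (X n)]
    [∀ n, PseudoMetricSpace (Y n)] (f : ∀ n, X n → Y n) : Prop :=
  ∀ ε : ℝ, 0 < ε → ∃ ω : ℝ, 0 < ω ∧ ∃ N : ℕ, ∀ n, N ≤ n → ∀ x y : X n,
    dist x y < ω → dist (f n x) (f n y) < ε

theorem exists_dist_eq_dist_inv_eq_dist_mul_right {G : Type*} [Group G] [PseudoMetricSpace G]
    [IsIsometricSMul G G] (g h k : G) :
    ∃ a b : G, dist a b = dist h k ∧ dist a⁻¹ b⁻¹ = dist (h * g) (k * g) := by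
  refine ⟨g⁻¹, g⁻¹ * (k⁻¹ * h), ?_, ?_⟩
  · calc dist g⁻¹ (g⁻¹ * (k⁻¹ * h)) = dist (g⁻¹ * 1) (g⁻¹ * (k⁻¹ * h)) := by rw [mul_one]
      _ = dist (k * 1) (k * (k⁻¹ * h)) := by rw [dist_mul_left, dist_mul_left]
      _ = dist h k := by rw [mul_one, mul_inv_cancel_left, dist_comm]
  · calc dist g⁻¹⁻¹ (g⁻¹ * (k⁻¹ * h))⁻¹ = dist (h * g) (h * (h⁻¹ * k * g)) := by
          rw [dist_mul_left]; group
      _ = dist (h * g) (k * g) := by rw [← mul_assoc, ← mul_assoc, mul_inv_cancel, one_mul]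

theorem EventuallyUniformlyEquicontinuous.mul_right {G : ℕ → Type*} [∀ n, Group (G n)]
    [∀ n, PseudoMetricSpace (G n)] [∀ n, IsIsometricSMul (G n) (G n)]
    (h_inv : EventuallyUniformlyEquicontinuous fun n (x : G n) => x⁻¹) (g : ∀ n, G n) :
    EventuallyUniformlyEquicontinuous fun n (x : G n) => x * g n := by
  intro ε hε
  obtain ⟨ω, hω, N, hN⟩ := h_inv ε hε
  refine ⟨ω, hω, N, fun n hn h k hhk => ?_⟩
  obtain ⟨a, b, hab, hab_inv⟩ := exists_dist_eq_dist_inv_eq_dist_mul_right (g n) h k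
  exact hab_inv ▸ hN n hn a b (hab ▸ hhk)

theorem regular_eq_bounded_of_inverse_equicontinuous_general
    (G : ℕ → Type*) [∀ n, Group (G n)] [∀ n, MetricSpace (G n)]
    (h_left : ∀ n, ∀ g h k : G n, dist (g * h) (g * k) = dist h k)
    (h_equi : ∀ ε : ℝ, 0 < ε → ∃ ω : ℝ, 0 < ω ∧ ∃ N : ℕ, ∀ n, N ≤ n →
      ∀ g h : G n, dist g h < ω → dist g⁻¹ h⁻¹ < ε) :
    {g : ∀ n, G n | RegularSeq g} = {g : ∀ n, G n | BoundedSeq g} := by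
  have : ∀ n, IsIsometricSMul (G n) (G n) := fun n =>
    ⟨fun c => Isometry.of_dist_eq (h_left n c)⟩
  ext g
  exact ⟨And.left, fun hg => ⟨hg, EventuallyUniformlyEquicontinuous.mul_right h_equi g⟩⟩

/-- If the inverse maps of a sequence of proper metric groups are
asymptotically uniformly equicontinuous, then every bounded sequence is regular,
i.e. the set of regular sequences equals the set of all bounded sequences. -/
theorem regular_eq_bounded_of_inverse_equicontinuous
    (G : ℕ → Type*) [∀ n, Group (G n)] [∀ n, MetricSpace (G n)]
    (h_left : ∀ n, ∀ g h k : G n, dist (g * h) (g * k) = dist h k)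
    (h_cont : ∀ n, Continuous fun p : G n × G n => p.1 * p.2)
    (h_inv : ∀ n, Continuous fun g : G n => g⁻¹)
    (h_proper : ∀ n, ProperSpace (G n))
    (h_equi : ∀ ε : ℝ, 0 < ε → ∃ ω : ℝ, 0 < ω ∧ ∃ N : ℕ, ∀ n, N ≤ n →
      ∀ g h : G n, dist g h < ω → dist g⁻¹ h⁻¹ < ε) :
    {g : ∀ n, G n | RegularSeq g} = {g : ∀ n, G n | BoundedSeq g} :=
  regular_eq_bounded_of_inverse_equicontinuous_general G h_left h_equi
end

section
/- Let A and B be unital C*-algebras. Let D be a dense ℝ-linear subspace of the self-adjoint part sa(A) of A with 1_A ∈ D, and let L : D → [0,∞) be a seminorm such that {a ∈ D : L(a) = 0} = ℝ·1_A. For unit-preserving bounded linear maps α, β : A → B, set mkD_L(α, β) = sup{‖α(a) − β(a)‖_B : a ∈ D, L(a) ≤ 1}. Let (α_n)_{n∈ℕ} be a sequence of unit-preserving bounded linear maps from A to B and α_∞ a unit-preserving bounded linear map from A to B, such that there exists B' > 0 with ‖α_n‖ ≤ B' for all n ∈ ℕ ∪ {∞} (operator norm), and lim_{n→∞} mkD_L(α_n,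 α_∞) = 0. Then for every a ∈ A, lim_{n→∞} ‖α_n(a) − α_∞(a)‖_B = 0. -/
/-!
The differences `α n - α'` form a uniformly bounded, hence equicontinuous, family, so the set of
points at which they tend to zero is a closed complex subspace of `A`. Every element of `D` is a
real multiple of an element of the `L`-unit ball, on which `α n - α'` tends to zero uniformly, so
this subspace contains `D`, hence `closure D ⊇ sa(A)`, hence `sa(A) + i • sa(A) = A`.
-/

open Filter Topology

section PointwiseNull

variable {ι 𝕜 E F : Type*} [NontriviallyNormedField 𝕜] [SeminormedAddCommGroup E]
  [NormedSpace 𝕜 E] [SeminormedAddCommGroup F] [NormedSpace 𝕜 F]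

def ContinuousLinearMap.tendstoZeroSubmodule (T : ι → E →L[𝕜] F) (l : Filter ι) :
    Submodule 𝕜 E where
  carrier := {x | Tendsto (fun i => T i x) l (𝓝 0)}
  zero_mem' := by simpa using tendsto_const_nhds
  add_mem' {x y} hx hy := by simpa using hx.add hy
  smul_mem' c x hx := by simpa using hx.const_smul c

theorem ContinuousLinearMap.isClosed_tendstoZeroSubmodule {T : ι → E →L[𝕜] F} {C : ℝ}
    (hT : ∀ i, ‖T i‖ ≤ C) (l : Filter ι) :
    IsClosed (tendstoZeroSubmodule T l : Set E) := by
  have hequi : Equicontinuous ((↑) ∘ T : ι → E → F) :=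
    ((NormedSpace.equicontinuous_TFAE T).out 5 1).1 (⟨C, hT⟩ : ∃ C, ∀ i, ‖T i‖ ≤ C)
  exact hequi.isClosed_setOfPred_tendsto continuous_const

end PointwiseNull

theorem Submodule.mem_of_forall_isSelfAdjoint_mem {A : Type*} [AddCommGroup A] [Module ℂ A]
    [StarAddMonoid A] [StarModule ℂ A] {S : Submodule ℂ A}
    (hS : ∀ a : A, IsSelfAdjoint a → a ∈ S) (a : A) : a ∈ S := by
  rw [← realPart_add_I_smul_imaginaryPart a]
  exact S.add_mem (hS _ (realPart a).2) (S.smul_mem _ (hS _ (imaginaryPart a).2))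

theorem tendsto_apply_zero_of_uniform_on_unitBall {ι E F : Type*} [AddCommGroup E] [Module ℝ E]
    [SeminormedAddCommGroup F] [NormedSpace ℝ F] {l : Filter ι} {T : ι → E →ₗ[ℝ] F}
    {D : Submodule ℝ E} {L : E → ℝ} (hL_smul : ∀ t : ℝ, ∀ a ∈ D, L (t • a) = |t| * L a)
    (hT : ∀ ε > 0, ∀ᶠ i in l, ∀ a ∈ D, L a ≤ 1 → ‖T i a‖ ≤ ε) {d : E} (hd : d ∈ D) :
    Tendsto (fun i => T i d) l (𝓝 0) := by
  set c := |L d| + 1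
  have hc : 0 < c := by positivity
  have hball : L (c⁻¹ • d) ≤ 1 := by
    rw [hL_smul _ _ hd, abs_inv, abs_of_pos hc, inv_mul_le_one₀ hc]
    linarith [le_abs_self (L d)]
  have hscaled : Tendsto (fun i => T i (c⁻¹ • d)) l (𝓝 0) := by
    refine Metric.tendsto_nhds.2 fun ε hε => ?_
    filter_upwards [hT (ε / 2) (by positivity)] with i hi
    rw [dist_zero_right]
    exact (hi _ (D.smul_mem _ hd) hball).trans_lt (by linarith)
  simpa [smul_smul, hc.ne'] using hscaled.const_smul c

theorem pointwise_convergence_of_mkD_convergence_general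
    (A B : Type*)
    [NormedRing A] [StarRing A] [NormedAlgebra ℂ A] [StarModule ℂ A]
    [NormedRing B] [NormedAlgebra ℂ B]
    (D : Submodule ℝ A)
    (hD_dense : ∀ a : A, IsSelfAdjoint a → a ∈ closure (D : Set A))
    (L : A → ℝ)
    (hL_smul : ∀ t : ℝ, ∀ a ∈ D, L (t • a) = |t| * L a)
    (α : ℕ → A →L[ℂ] B) (α' : A →L[ℂ] B)
    (B' : ℝ)
    (hα_bdd : ∀ n, ‖α n‖ ≤ B') (hα'_bdd : ‖α'‖ ≤ B')
    (h_mkD : ∀ ε : ℝ, 0 < ε → ∃ N : ℕ, ∀ n, N ≤ n →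
      ∀ a ∈ D, L a ≤ 1 → ‖α n a - α' a‖ ≤ ε) :
    ∀ a : A, Filter.Tendsto (fun n => ‖α n a - α' a‖) Filter.atTop (nhds 0) := by
  let S := ContinuousLinearMap.tendstoZeroSubmodule (fun n => α n - α') atTop
  have hS_closed : IsClosed (S : Set A) :=
    ContinuousLinearMap.isClosed_tendstoZeroSubmodule
      (fun n => (norm_sub_le _ _).trans (add_le_add (hα_bdd n) hα'_bdd)) atTop
  have hD : (D : Set A) ⊆ S := fun d hd =>
    tendsto_apply_zero_of_uniform_on_unitBall
      (T := fun n => (↑(α n - α') : A →ₗ[ℂ] B).restrictScalars ℝ)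
      hL_smul (fun ε hε => eventually_atTop.2 (h_mkD ε hε)) hd
  have hS_sa (a : A) (ha : IsSelfAdjoint a) : a ∈ S :=
    hS_closed.closure_subset_iff.2 hD (hD_dense a ha)
  intro a
  simpa using (Submodule.mem_of_forall_isSelfAdjoint_mem hS_sa a).norm

/-- Let `A`, `B` be unital C*-algebras, `D` a dense ℝ-linear
subspace of `sa(A)` containing `1`, and `L` a seminorm on `D` whose kernel is
`ℝ·1`.  If a uniformly bounded sequence `(α_n)` of unit-preserving bounded linear
maps converges to a unit-preserving bounded linear map `α_∞` for the distance
`mkD_L(α, β) = sup {‖α(a) − β(a)‖ : a ∈ D, L(a) ≤ 1}`, then `(α_n)` converges to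
`α_∞` pointwise in norm.  (Convergence of `mkD_L(α_n, α_∞)` to `0` is expressed by
its `ε`-`N` characterization.) -/
theorem pointwise_convergence_of_mkD_convergence
    (A B : Type*)
    [NormedRing A] [StarRing A] [CStarRing A] [NormedAlgebra ℂ A] [StarModule ℂ A]
    [CompleteSpace A]
    [NormedRing B] [StarRing B] [CStarRing B] [NormedAlgebra ℂ B] [StarModule ℂ B]
    [CompleteSpace B]
    (D : Submodule ℝ A)
    (hD_sa : ∀ a ∈ D, IsSelfAdjoint a)
    (hD_one : (1 : A) ∈ D)
    (hD_dense : ∀ a : A, IsSelfAdjoint a → a ∈ closure (D : Set A))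
    (L : A → ℝ)
    (hL_nonneg : ∀ a ∈ D, 0 ≤ L a)
    (hL_add : ∀ a ∈ D, ∀ b ∈ D, L (a + b) ≤ L a + L b)
    (hL_smul : ∀ t : ℝ, ∀ a ∈ D, L (t • a) = |t| * L a)
    (hL_ker : {a : A | a ∈ D ∧ L a = 0} = {a : A | ∃ t : ℝ, a = t • (1 : A)})
    (α : ℕ → A →L[ℂ] B) (α' : A →L[ℂ] B)
    (hα_one : ∀ n, α n 1 = 1) (hα'_one : α' 1 = 1)
    (B' : ℝ) (hB' : 0 < B')
    (hα_bdd : ∀ n, ‖α n‖ ≤ B') (hα'_bdd : ‖α'‖ ≤ B')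
    (h_mkD : ∀ ε : ℝ, 0 < ε → ∃ N : ℕ, ∀ n, N ≤ n →
      ∀ a ∈ D, L a ≤ 1 → ‖α n a - α' a‖ ≤ ε) :
    ∀ a : A, Filter.Tendsto (fun n => ‖α n a - α' a‖) Filter.atTop (nhds 0) :=
  pointwise_convergence_of_mkD_convergence_general A B D hD_dense L hL_smul α α' B' hα_bdd hα'_bdd
    h_mkD
end

section
/- Let A and B be unital C*-algebras. Let D be a dense ℝ-linear subspace of the self-adjoint part sa(A) of A with 1_A ∈ D, and let L : D → [0,∞) be a seminorm such that L(1_A) = 0. Suppose there exists a state μ of A such that the set {a ∈ D : L(a) ≤ 1, μ(a) = 0} is totally bounded for the norm of A. For unit-preserving bounded linear maps α, β : A → B, set mkD_L(α, β) = sup{‖α(a) − β(a)‖_B : a ∈ D, L(a) ≤ 1}. Let (α_n)_{n∈ℕ} be a sequence of unit-preserving bounded linear maps from A to B and α_∞ a unit-preserving bounded linear map from A to B, such that there exists B' > 0 with ‖α_n‖ ≤ B' for all n ∈ ℕ ∪ {∞} (operator norm), and for every a ∈ A, lim_{n→∞} ‖α_n(a) − α_∞(a)‖_B = 0. Then lim_{n→∞}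 mkD_L(α_n, α_∞) = 0. -/
open scoped ComplexOrder NNReal Topology
open Filter ContinuousLinearMap

/-! A pointwise convergent sequence of maps with a common Lipschitz constant converges uniformly on
every totally bounded set (an `ε/3` argument over a finite net). Unit-preserving maps `α_n`, `α_∞`
agree on scalars, and since a state is real on self-adjoint elements, `a ↦ a - μ(a) 1` maps the
`L`-unit ball of `D` into the totally bounded set `{a ∈ D : L a ≤ 1, μ a = 0}` without changing
`α_n a - α_∞ a`. -/

theorem TotallyBounded.tendstoUniformlyOn_of_tendsto_of_lipschitzWith
    {ι α β : Type*} [PseudoMetricSpace α] [PseudoMetricSpace β] {l : Filter ι}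
    {F : ι → α → β} {f : α → β} {s : Set α} {K : ℝ≥0}
    (hs : TotallyBounded s) (hF : ∀ i, LipschitzWith K (F i)) (hf : LipschitzWith K f)
    (h : ∀ x, Tendsto (fun i => F i x) l (𝓝 (f x))) :
    TendstoUniformlyOn F f l s := by
  rw [Metric.tendstoUniformlyOn_iff]
  intro ε hε
  set δ := ε / (3 * (K + 1))
  have hδ : 0 < δ := by positivity
  have hKδ : K * δ ≤ ε / 3 := by
    rw [mul_div_assoc', div_le_div_iff₀ (by positivity) (by norm_num)]
    nlinarith
  obtain ⟨t, ht, hst⟩ := Metric.totallyBounded_iff.mp hs δ hδ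
  have hnet : ∀ᶠ i in l, ∀ y ∈ t, dist (f y) (F i y) < ε / 3 :=
    ht.eventually_all.2 fun y _ =>
      (Metric.tendsto_nhds.mp (h y) (ε / 3) (by positivity)).mono fun i hi =>
        dist_comm (F i y) (f y) ▸ hi
  filter_upwards [hnet] with i hi x hx
  obtain ⟨y, hyt, hxy_ball⟩ := Set.mem_iUnion₂.mp (hst hx)
  have hxy : dist x y ≤ δ := (Metric.mem_ball.mp hxy_ball).le
  have hfxy : dist (f x) (f y) ≤ K * δ := (hf.dist_le_mul x y).trans (by gcongr)
  have hFxy : dist (F i y) (F i x) ≤ K * δ :=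
    ((hF i).dist_le_mul y x).trans (by rw [dist_comm]; gcongr)
  linarith [dist_triangle4 (f x) (f y) (F i y) (F i x), hi y hyt]

theorem im_apply_eq_zero_of_isSelfAdjoint {A F : Type*} [Ring A] [StarRing A]
    [FunLike F A ℂ] [AddMonoidHomClass F A ℂ] (μ : F) (hμ : ∀ a, 0 ≤ μ (star a * a))
    {a : A} (ha : IsSelfAdjoint a) : (μ a).im = 0 := by
  have him : ∀ b : A, (μ (star b * b)).im = 0 := fun b =>
    ((Complex.nonneg_iff.mp (hμ b)).2).symm
  have hexpand : star (a + 1) * (a + 1) = star a * a + a + a + star 1 * 1 := by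
    rw [star_add, star_one, ha.star_eq]; noncomm_ring
  have := him (a + 1)
  rw [hexpand, map_add, map_add, map_add, Complex.add_im, Complex.add_im, Complex.add_im, him a,
    him 1] at this
  linarith

theorem apply_add_smul_le_of_apply_eq_zero {E : Type*} [AddCommGroup E] [Module ℝ E]
    {D : Submodule ℝ E} {L : E → ℝ} (hL_add : ∀ a ∈ D, ∀ b ∈ D, L (a + b) ≤ L a + L b)
    (hL_smul : ∀ t : ℝ, ∀ a ∈ D, L (t • a) = |t| * L a) {e : E} (he : e ∈ D) (hLe : L e = 0)
    {a : E} (ha : a ∈ D) (t : ℝ) : L (a + t • e) ≤ L a := by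
  simpa [hL_smul t e he, hLe] using hL_add a ha (t • e) (D.smul_mem t he)

theorem mkD_convergence_of_pointwise_convergence_general
    (A B : Type*)
    [NormedRing A] [StarRing A] [NormedAlgebra ℂ A]
    [NormedRing B] [NormedAlgebra ℂ B]
    (D : Submodule ℝ A)
    (hD_sa : ∀ a ∈ D, IsSelfAdjoint a)
    (hD_one : (1 : A) ∈ D)
    (L : A → ℝ)
    (hL_add : ∀ a ∈ D, ∀ b ∈ D, L (a + b) ≤ L a + L b)
    (hL_smul : ∀ t : ℝ, ∀ a ∈ D, L (t • a) = |t| * L a)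
    (hL_one : L 1 = 0)
    (μ : A →L[ℂ] ℂ)
    (hμ_one : μ 1 = 1)
    (hμ_pos : ∀ a : A, 0 ≤ μ (star a * a))
    (h_tb : TotallyBounded {a : A | a ∈ D ∧ L a ≤ 1 ∧ μ a = 0})
    (α : ℕ → A →L[ℂ] B) (α' : A →L[ℂ] B)
    (hα_one : ∀ n, α n 1 = 1) (hα'_one : α' 1 = 1)
    (B' : ℝ)
    (hα_bdd : ∀ n, ‖α n‖ ≤ B') (hα'_bdd : ‖α'‖ ≤ B')
    (h_ptwise : ∀ a : A,
      Filter.Tendsto (fun n => ‖α n a - α' a‖) Filter.atTop (nhds 0)) :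
    ∀ ε : ℝ, 0 < ε → ∃ N : ℕ, ∀ n, N ≤ n →
      ∀ a ∈ D, L a ≤ 1 → ‖α n a - α' a‖ ≤ ε := by
  intro ε hε
  have hunif : TendstoUniformlyOn (fun n => ⇑(α n)) α' atTop
      {a : A | a ∈ D ∧ L a ≤ 1 ∧ μ a = 0} :=
    h_tb.tendstoUniformlyOn_of_tendsto_of_lipschitzWith (K := B'.toNNReal)
      (fun n => lipschitzWith_of_opNorm_le ((hα_bdd n).trans B'.le_coe_toNNReal))
      (lipschitzWith_of_opNorm_le (hα'_bdd.trans B'.le_coe_toNNReal))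
      (fun a => tendsto_iff_norm_sub_tendsto_zero.mpr (h_ptwise a))
  obtain ⟨N, hN⟩ := eventually_atTop.mp (Metric.tendstoUniformlyOn_iff.mp hunif ε hε)
  refine ⟨N, fun n hn a ha haL => ?_⟩
  set r := (μ a).re
  have hcentered : a + (-r) • (1 : A) ∈ {a : A | a ∈ D ∧ L a ≤ 1 ∧ μ a = 0} := by
    refine ⟨D.add_mem ha (D.smul_mem _ hD_one),
      (apply_add_smul_le_of_apply_eq_zero hL_add hL_smul hD_one hL_one ha _).trans haL, ?_⟩
    have him := im_apply_eq_zero_of_isSelfAdjoint μ hμ_pos (hD_sa a ha)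
    simp [Complex.ext_iff, hμ_one, him, r]
  have hshift : ∀ γ : A →L[ℂ] B, γ 1 = 1 → γ (a + (-r) • 1) = γ a + (-r) • 1 :=
    fun γ hγ => by rw [map_add, γ.map_smul_of_tower, hγ]
  calc ‖α n a - α' a‖ = dist (α' (a + (-r) • 1)) (α n (a + (-r) • 1)) := by
        rw [dist_eq_norm', hshift _ (hα_one n), hshift _ hα'_one, add_sub_add_right_eq_sub]
    _ ≤ ε := (hN n hn _ hcentered).le

/-- Let `A`, `B` be unital C*-algebras, `D` a dense ℝ-linear
subspace of `sa(A)` containing `1`, and `L` a seminorm on `D` with `L(1) = 0`.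
Assume there is a state `μ` of `A` such that `{a ∈ D : L(a) ≤ 1, μ(a) = 0}` is
totally bounded in norm.  If a uniformly bounded sequence `(α_n)` of
unit-preserving bounded linear maps converges pointwise in norm to a
unit-preserving bounded linear map `α_∞`, then `mkD_L(α_n, α_∞) → 0`, expressed by
its `ε`-`N` characterization: for every `ε > 0` there is `N` with
`‖α_n(a) − α_∞(a)‖ ≤ ε` for all `n ≥ N` and all `a ∈ D` with `L(a) ≤ 1`. -/
theorem mkD_convergence_of_pointwise_convergence
    (A B : Type*)
    [NormedRing A] [StarRing A] [CStarRing A] [NormedAlgebra ℂ A] [StarModule ℂ A]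
    [CompleteSpace A]
    [NormedRing B] [StarRing B] [CStarRing B] [NormedAlgebra ℂ B] [StarModule ℂ B]
    [CompleteSpace B]
    (D : Submodule ℝ A)
    (hD_sa : ∀ a ∈ D, IsSelfAdjoint a)
    (hD_one : (1 : A) ∈ D)
    (hD_dense : ∀ a : A, IsSelfAdjoint a → a ∈ closure (D : Set A))
    (L : A → ℝ)
    (hL_nonneg : ∀ a ∈ D, 0 ≤ L a)
    (hL_add : ∀ a ∈ D, ∀ b ∈ D, L (a + b) ≤ L a + L b)
    (hL_smul : ∀ t : ℝ, ∀ a ∈ D, L (t • a) = |t| * L a)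
    (hL_one : L 1 = 0)
    (μ : A →L[ℂ] ℂ)
    (hμ_one : μ 1 = 1)
    (hμ_pos : ∀ a : A, 0 ≤ μ (star a * a))
    (h_tb : TotallyBounded {a : A | a ∈ D ∧ L a ≤ 1 ∧ μ a = 0})
    (α : ℕ → A →L[ℂ] B) (α' : A →L[ℂ] B)
    (hα_one : ∀ n, α n 1 = 1) (hα'_one : α' 1 = 1)
    (B' : ℝ) (hB' : 0 < B')
    (hα_bdd : ∀ n, ‖α n‖ ≤ B') (hα'_bdd : ‖α'‖ ≤ B')
    (h_ptwise : ∀ a : A,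
      Filter.Tendsto (fun n => ‖α n a - α' a‖) Filter.atTop (nhds 0)) :
    ∀ ε : ℝ, 0 < ε → ∃ N : ℕ, ∀ n, N ≤ n →
      ∀ a ∈ D, L a ≤ 1 → ‖α n a - α' a‖ ≤ ε :=
  mkD_convergence_of_pointwise_convergence_general A B D hD_sa hD_one L hL_add hL_smul hL_one μ
    hμ_one hμ_pos h_tb α α' hα_one hα'_one B' hα_bdd hα'_bdd h_ptwise
end
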